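/- Let f: D^2 → A be a unanimous, tops-only, locally strategy-proof scf on a domain D, and let (a,b) be an edge of the induced graph G(D). Then either f(P_1, P_2) = a for all profiles with r_1(P_1) = a and r_1(P_2) = b, or f(P_1, P_2) = b for all such profiles. -/
import Mathlib


open Relation

/-- A preference is a ranking: a bijection from alternatives to ranks (0 = best). -/
abbrev Pref (A : Type*) [Fintype A] := A ≃ Fin (Fintype.card A)

namespace Pref

variable {A : Type*} [Fintype A]

/-- The rank (as a natural number, 0 = best) of alternative `a` in preference `P`. -/
def rk (P : Pref A) (a : A) : ℕ := (P a : ℕ)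

/-- The top-ranked alternative of `P`. -/
noncomputable def top [Nonempty A] (P : Pref A) : A := P.symm ⟨0, Fintype.card_pos⟩

/-- `a` is strictly preferred to `b` under `P`. -/
def SPrefers (P : Pref A) (a b : A) : Prop := rk P a < rk P b

/-- Two preferences are adjacent if they differ by one swap of consecutively
ranked alternatives. -/
def Adjacent (P P' : Pref A) : Prop :=
  ∃ a b : A, rk P a = rk P b + 1 ∧ rk P' a = rk P b ∧ rk P' b = rk P a ∧
    ∀ c : A, c ≠ a → c ≠ b → rk P c = rk P' c

end Pref

open Pref

variable {A : Type*} [Fintype A] [Nonempty A]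

/-- One step between members of the domain `D` along adjacent preferences. -/
def StepRel (D : Set (Pref A)) (P Q : Pref A) : Prop := P ∈ D ∧ Q ∈ D ∧ Adjacent P Q

/-- The domain `D` is connected: any two members are joined by a path of
adjacent preferences inside `D`. -/
def DConnected (D : Set (Pref A)) : Prop :=
  ∀ P ∈ D, ∀ Q ∈ D, ReflTransGen (StepRel D) P Q

/-- One step inside `D` along adjacent preferences keeping the same top. -/
def TStepRel (D : Set (Pref A)) (P Q : Pref A) : Prop :=
  StepRel D P Q ∧ Pref.top P = Pref.top Q

/-- The top-connected closure of `P` in `D`. -/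
def TCC (D : Set (Pref A)) (P : Pref A) : Set (Pref A) :=
  {Q | ReflTransGen (TStepRel D) P Q}

/-- Neighbours of a subset `S` inside the domain `D`. -/
def Nbr (D S : Set (Pref A)) : Set (Pref A) :=
  {Q | Q ∈ D ∧ Q ∉ S ∧ ∃ P ∈ S, Adjacent P Q}

/-- `D` is connected with two distinct neighbours. -/
def CDN (D : Set (Pref A)) : Prop :=
  DConnected D ∧
    ∀ P ∈ D, ∃ Q ∈ Nbr D (TCC D P), ∃ R ∈ Nbr D (TCC D P), Pref.top Q ≠ Pref.top R

/-- Every alternative is top-ranked in some preference of `D`. -/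
def MinimallyRich (D : Set (Pref A)) : Prop := ∀ a : A, ∃ P ∈ D, Pref.top P = a

/-- The edge relation of the induced graph `G(D)` on alternatives. -/
def EdgeD (D : Set (Pref A)) (a b : A) : Prop :=
  ∃ P ∈ D, ∃ P' ∈ D, Adjacent P P' ∧
    Pref.top P = a ∧ Pref.top P' = b ∧ rk P b = 1 ∧ rk P' a = 1

/-- `v 0, v 1, …, v (k-1)` is a path in the induced graph `G(D)`. -/
def IsPathD (D : Set (Pref A)) (k : ℕ) (v : ℕ → A) : Prop :=
  (∀ i j, i < k → j < k → v i = v j → i = j) ∧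
    ∀ i, i + 1 < k → EdgeD D (v i) (v (i + 1))

/-- Connected component of `P` in `D`. -/
def Component (D : Set (Pref A)) (P : Pref A) : Set (Pref A) :=
  {Q | Q ∈ D ∧ ReflTransGen (StepRel D) P Q}

section SCF

variable {n : ℕ} (D : Set (Pref A))

/-- Unanimity. -/
def Unanimous (f : (Fin n → D) → A) : Prop :=
  ∀ (P : Fin n → D) (a : A), (∀ i, Pref.top (P i : Pref A) = a) → f P = a

/-- Local strategy-proofness. -/
def LocallySP (f : (Fin n → D) → A) : Prop :=
  ∀ (P : Fin n → D) (i : Fin n) (Q : D), Adjacent (P i : Pref A) (Q : Pref A) →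
    ¬ SPrefers (P i : Pref A) (f (Function.update P i Q)) (f P)

/-- (Global) strategy-proofness. -/
def StrategyProof (f : (Fin n → D) → A) : Prop :=
  ∀ (P : Fin n → D) (i : Fin n) (Q : D),
    ¬ SPrefers (P i : Pref A) (f (Function.update P i Q)) (f P)

/-- Tops-onlyness. -/
def TopsOnly (f : (Fin n → D) → A) : Prop :=
  ∀ P P' : Fin n → D,
    (∀ i, Pref.top (P i : Pref A) = Pref.top (P' i : Pref A)) → f P = f P'

/-- Dictatorship. -/
def Dictatorial (f : (Fin n → D) → A) : Prop :=
  ∃ i : Fin n, ∀ P : Fin n → D, f P = Pref.top (P i : Pref A)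

/-- Voter `i` is decisive over `a`. -/
def Decisive (f : (Fin n → D) → A) (i : Fin n) (a : A) : Prop :=
  ∀ P : Fin n → D, Pref.top (P i : Pref A) = a → f P = a

end SCF


lemma adj_symm {A : Type*} [Fintype A] {P P' : Pref A} (h : Pref.Adjacent P P') :
    Pref.Adjacent P' P := by
  obtain ⟨a, b, h1, h2, h3, h4⟩ := h
  exact ⟨b, a, by omega, by omega, by omega, fun c hc hc' => (h4 c hc' hc).symm⟩

/-- Claim 1: for an edge `(a,b)` of `G(D)`, a unanimous, tops-only, locally
strategy-proof two-voter scf always selects `a`, or always selects `b`, on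
profiles with tops `(a,b)`. -/
theorem stmt7 {A : Type*} [Fintype A] [Nonempty A] (hA : 3 ≤ Fintype.card A)
    (D : Set (Pref A)) (f : (Fin 2 → D) → A)
    (hu : Unanimous D f) (hto : TopsOnly D f) (hlsp : LocallySP D f)
    (a b : A) (hab : EdgeD D a b) :
    (∀ P : Fin 2 → D, Pref.top (P 0 : Pref A) = a →
        Pref.top (P 1 : Pref A) = b → f P = a) ∨
    (∀ P : Fin 2 → D, Pref.top (P 0 : Pref A) = a →
        Pref.top (P 1 : Pref A) = b → f P = b) := by
  obtain ⟨P, hP, P', hP', hadj, htopP, htopP', hrkPb, hrkP'a⟩ := hab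
  set PP : Fin 2 → D := ![⟨P, hP⟩, ⟨P', hP'⟩] with hPPdef
  have hupd : Function.update PP 1 ⟨P, hP⟩ = ![⟨P,hP⟩, ⟨P,hP⟩] := by
    funext i; fin_cases i <;> simp [PP, Function.update]
  have huni : f (Function.update PP 1 ⟨P, hP⟩) = a := by
    rw [hupd]; apply hu; intro i; fin_cases i <;> simpa using htopP
  have hadj' : Pref.Adjacent (PP 1 : Pref A) (P : Pref A) := by
    simpa [PP] using adj_symm hadj
  have hlsp' := hlsp PP 1 ⟨P, hP⟩ hadj'
  rw [huni] at hlsp'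
  have hPP1 : (PP 1 : Pref A) = P' := by simp [PP]
  rw [hPP1] at hlsp'
  have hle : Pref.rk P' (f PP) ≤ 1 := by
    unfold SPrefers at hlsp'
    omega
  have hxab : f PP = a ∨ f PP = b := by
    rcases Nat.lt_or_ge (Pref.rk P' (f PP)) 1 with h | h
    · right
      have h0 : (P' (f PP) : ℕ) = 0 := by
        have := h; unfold Pref.rk at this; omega
      have hb : P' b = ⟨0, Fintype.card_pos⟩ := by
        rw [← htopP']; simp [Pref.top]
      have : P' (f PP) = P' b := by
        rw [hb]; exact Fin.ext h0
      exact P'.injective this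
    · left
      have h1 : Pref.rk P' (f PP) = 1 := le_antisymm hle h
      have : P' (f PP) = P' a := by
        apply Fin.ext
        have := h1; unfold Pref.rk at this
        have := hrkP'a; unfold Pref.rk at this
        omega
      exact P'.injective this
  have key : ∀ Q : Fin 2 → D, Pref.top (Q 0 : Pref A) = a →
      Pref.top (Q 1 : Pref A) = b → f Q = f PP := by
    intro Q h0 h1
    apply hto
    intro i
    fin_cases i
    · show Pref.top (Q 0 : Pref A) = Pref.top (PP 0 : Pref A)
      rw [h0]; simp [PP, htopP]
    · show Pref.top (Q 1 : Pref A) = Pref.top (PP 1 : Pref A)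
      rw [h1]; simp [PP, htopP']
  rcases hxab with hx | hx
  · left; intro Q h0 h1; rw [key Q h0 h1, hx]
  · right; intro Q h0 h1; rw [key Q h0 h1, hx]
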